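/- Let F be a distribution on [0,∞) such that F ∈ OS and F^{*2} ∈ L(γ) for some γ ≥ 0, and suppose that for all t > 0, liminf_{x→∞} F̄(x-t)/F̄(x) ≥ e^{γt}. Then F ∈ L(γ). -/

import Mathlib

open MeasureTheory Filter Set Asymptotics

/-- The tail `F̄(x) = μ((x,∞))` of a distribution `μ` on `ℝ`. -/
noncomputable def tail (μ : MeasureTheory.Measure ℝ) (x : ℝ) : ℝ := (μ (Set.Ioi x)).toReal

/-- Convolution of two distributions on `ℝ`. -/
noncomputable def mconv (μ ν : MeasureTheory.Measure ℝ) : MeasureTheory.Measure ℝ :=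
  MeasureTheory.Measure.map (fun p : ℝ × ℝ => p.1 + p.2) (μ.prod ν)

/-- `iconv μ k` is the `k`-fold convolution `μ^{*k}` (with `μ^{*0} = δ₀`). -/
noncomputable def iconv (μ : MeasureTheory.Measure ℝ) : ℕ → MeasureTheory.Measure ℝ
  | 0 => MeasureTheory.Measure.dirac 0
  | n + 1 => mconv (iconv μ n) μ

/-- The class `L(γ)`: `F̄(x-t) ~ e^{γt} F̄(x)` as `x → ∞`, for every `t`. -/
def MemL (γ : ℝ) (μ : MeasureTheory.Measure ℝ) : Prop :=
  ∀ t : ℝ, Filter.Tendsto (fun x => tail μ (x - t) / tail μ x) Filter.atTop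
    (nhds (Real.exp (γ * t)))

/-- The class `OS`: `limsup_{x→∞} (F*F)̄(x) / F̄(x) < ∞`. -/
def MemOS (μ : MeasureTheory.Measure ℝ) : Prop :=
  Filter.IsBoundedUnder (· ≤ ·) Filter.atTop (fun x => tail (mconv μ μ) x / tail μ x)

/-!
Write `G = F * F` and let `X, Y` be independent with law `F`. The lower bound being assumed, it
remains to show `F̄(x - t) ≤ (e^{γt} + o(1)) F̄(x)`.

Fatou's lemma applied to `Ḡ(x) / F̄(x) = ∫ F̄(x - y) / F̄(x) dF(y)` turns the liminf hypothesis and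
the OS bound `Ḡ ≤ C F̄` into `∫ e^{γy} dF(y) ≤ C`, hence `e^{γb} F̄(b) → 0`.

For `a + b = z - T` the events `{Y ≤ a}` and `{X ≤ b}` are disjoint inside `{X + Y > z - T}`,
and together with `{Y > a, X > b}` they cover `{X + Y > z}`. Comparing `F̄(z - T - y)` with
`(e^{γT} - η) F̄(z - y)` on both pieces therefore bounds `Ḡ(z - T)` below by `(e^{γT} - η) Ḡ(z)`,
up to `F̄(a) F̄(b) ≤ Ḡ(a) F̄(b) ≲ e^{γT} e^{γb} F̄(b) Ḡ(z)`, which is small for large `b`. With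
`z = x + s` and `T = t + w`, on a window `(s - w, s]` of positive `F`-mass the comparison improves
to `F̄(z - T - y) ≥ F̄(x - t)` against `F̄(z - y) ≤ F̄(x)`. Since `Ḡ(z - T) ≤ (e^{γT} + η) Ḡ(z)` and
`Ḡ(z) ≤ C F̄(x)`, the gain `F̄(x - t) - e^{γT} F̄(x)` is `O(η) F̄(x)`; finally let `T ↓ t`.
-/

open Real Topology

lemma ENNReal.ofReal_le_liminf {α : Type*} {l : Filter α} {u : α → ℝ} {L : ℝ}
    (h : ∀ c < L, ∀ᶠ x in l, c ≤ u x) :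
    ENNReal.ofReal L ≤ liminf (fun x => ENNReal.ofReal (u x)) l := by
  refine le_of_forall_lt_imp_le_of_dense fun c hc => ?_
  have hc_top : c ≠ ⊤ := ne_top_of_lt hc
  rw [← ENNReal.ofReal_toReal hc_top]
  exact le_liminf_of_le (by isBoundedDefault) <|
    (h _ ((ENNReal.lt_ofReal_iff_toReal_lt hc_top).1 hc)).mono fun _ hx =>
      ENNReal.ofReal_le_ofReal hx

section Convolution

variable (μ ν : Measure ℝ)

lemma tail_eq_measureReal (x : ℝ) : tail μ x = μ.real (Ioi x) := rfl

lemma tail_nonneg (x : ℝ) : 0 ≤ tail μ x := ENNReal.toReal_nonneg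

lemma tail_mconv (v : ℝ) : tail (mconv μ ν) v = (μ.prod ν).real {p | v < p.1 + p.2} := by
  rw [tail, mconv, Measure.map_apply (by fun_prop) measurableSet_Ioi]
  rfl

lemma measurable_measure_Ioi_sub (v : ℝ) : Measurable fun y => μ (Ioi (v - y)) :=
  Monotone.measurable fun _ _ h => measure_mono (Ioi_subset_Ioi (sub_le_sub_left h v))

lemma measurable_tail_sub (v : ℝ) : Measurable fun y => tail μ (v - y) :=
  (measurable_measure_Ioi_sub μ v).ennreal_toReal

lemma tail_antitone [IsFiniteMeasure μ] : Antitone (tail μ) := fun _ _ h =>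
  measureReal_mono (Ioi_subset_Ioi h)

lemma integrable_tail_sub [IsFiniteMeasure μ] [IsFiniteMeasure ν] (v : ℝ) :
    Integrable (fun y => tail μ (v - y)) ν :=
  .of_bound (measurable_tail_sub μ v).aestronglyMeasurable (μ.real univ) <| ae_of_all _ fun y => by
    rw [Real.norm_of_nonneg (tail_nonneg μ _)]
    exact measureReal_mono (subset_univ _)

lemma measureReal_prod_snd_mem [IsFiniteMeasure μ] [SFinite ν] {s : Set ℝ}
    (hs : MeasurableSet s) (v : ℝ) :
    (μ.prod ν).real {p | p.2 ∈ s ∧ v < p.1 + p.2} = ∫ y in s, tail μ (v - y) ∂ν := by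
  have hS : MeasurableSet {p : ℝ × ℝ | p.2 ∈ s ∧ v < p.1 + p.2} :=
    (measurable_snd hs).inter
      (measurableSet_lt measurable_const (measurable_fst.add measurable_snd))
  have hslice : ∀ y, μ ((fun x => (x, y)) ⁻¹' {p : ℝ × ℝ | p.2 ∈ s ∧ v < p.1 + p.2}) =
      s.indicator (fun y => μ (Ioi (v - y))) y := by
    intro y
    by_cases hy : y ∈ s
    · rw [Set.indicator_of_mem hy]
      congr 1
      ext x
      simp [hy, sub_lt_iff_lt_add]
    · simp [hy]
  rw [measureReal_def, Measure.prod_apply_symm hS, funext hslice, lintegral_indicator hs,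
    ← integral_toReal (measurable_measure_Ioi_sub μ v).aemeasurable
      (ae_of_all _ fun _ => measure_lt_top _ _)]
  rfl

lemma measureReal_prod_fst_mem [SFinite μ] [IsFiniteMeasure ν] {s : Set ℝ}
    (hs : MeasurableSet s) (v : ℝ) :
    (μ.prod ν).real {p | p.1 ∈ s ∧ v < p.1 + p.2} = ∫ x in s, tail ν (v - x) ∂μ := by
  have hS : MeasurableSet {p : ℝ × ℝ | p.1 ∈ s ∧ v < p.1 + p.2} :=
    (measurable_fst hs).inter
      (measurableSet_lt measurable_const (measurable_fst.add measurable_snd))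
  rw [← measureReal_prod_snd_mem ν μ hs, ← Measure.prod_swap,
    map_measureReal_apply measurable_swap hS]
  congr 1
  ext p
  simp [add_comm]

lemma tail_mconv_eq_integral [IsFiniteMeasure μ] [SFinite ν] (v : ℝ) :
    tail (mconv μ ν) v = ∫ y, tail μ (v - y) ∂ν := by
  rw [tail_mconv]
  simpa using measureReal_prod_snd_mem μ ν MeasurableSet.univ v

lemma tail_mconv_le [IsFiniteMeasure μ] [IsFiniteMeasure ν] (a b v : ℝ) :
    tail (mconv μ ν) v ≤ ∫ y in Iic a, tail μ (v - y) ∂ν + ∫ x in Iic b, tail ν (v - x) ∂μ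
      + tail μ b * tail ν a := by
  rw [tail_mconv, ← measureReal_prod_snd_mem μ ν measurableSet_Iic,
    ← measureReal_prod_fst_mem μ ν measurableSet_Iic, tail_eq_measureReal, tail_eq_measureReal,
    ← measureReal_prod_prod]
  have hcover : {p : ℝ × ℝ | v < p.1 + p.2} ⊆ {p | p.2 ∈ Iic a ∧ v < p.1 + p.2} ∪
      {p | p.1 ∈ Iic b ∧ v < p.1 + p.2} ∪ Ioi b ×ˢ Ioi a := by
    intro p hp
    by_cases h2 : p.2 ≤ a
    · exact Or.inl (Or.inl ⟨h2, hp⟩)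
    by_cases h1 : p.1 ≤ b
    · exact Or.inl (Or.inr ⟨h1, hp⟩)
    exact Or.inr ⟨lt_of_not_ge h1, lt_of_not_ge h2⟩
  exact (measureReal_mono hcover).trans ((measureReal_union_le _ _).trans
    (add_le_add (measureReal_union_le _ _) le_rfl))

lemma le_tail_mconv [IsFiniteMeasure μ] [IsFiniteMeasure ν] {a b v : ℝ} (hv : a + b ≤ v) :
    ∫ y in Iic a, tail μ (v - y) ∂ν + ∫ x in Iic b, tail ν (v - x) ∂μ ≤ tail (mconv μ ν) v := by
  have hdisj : Disjoint {p : ℝ × ℝ | p.2 ∈ Iic a ∧ v < p.1 + p.2}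
      {p : ℝ × ℝ | p.1 ∈ Iic b ∧ v < p.1 + p.2} := by
    refine Set.disjoint_left.2 fun p h2 h1 => h1.2.not_ge ?_
    linarith [h1.1.out, h2.1.out]
  have hmeas : MeasurableSet {p : ℝ × ℝ | p.1 ∈ Iic b ∧ v < p.1 + p.2} :=
    (measurable_fst measurableSet_Iic).inter
      (measurableSet_lt measurable_const (measurable_fst.add measurable_snd))
  rw [tail_mconv, ← measureReal_prod_snd_mem μ ν measurableSet_Iic,
    ← measureReal_prod_fst_mem μ ν measurableSet_Iic, ← measureReal_union hdisj hmeas]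
  exact measureReal_mono fun p hp => hp.elim And.right And.right

lemma tail_le_tail_mconv [IsFiniteMeasure μ] [IsProbabilityMeasure ν] (hν : ν (Iio 0) = 0) (v : ℝ) :
    tail μ v ≤ tail (mconv μ ν) v := by
  have hν' : ∀ᵐ y ∂ν, 0 ≤ y := measure_mono_null (fun y (hy : ¬ 0 ≤ y) => (not_le.1 hy : y < 0)) hν
  calc tail μ v = ∫ _, tail μ v ∂ν := by simp
    _ ≤ ∫ y, tail μ (v - y) ∂ν := integral_mono_ae (integrable_const _) (integrable_tail_sub μ ν v)
        (hν'.mono fun y hy => tail_antitone μ (by linarith))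
    _ = tail (mconv μ ν) v := (tail_mconv_eq_integral μ ν v).symm

end Convolution

section Ratio

variable {μ : Measure ℝ}

lemma tail_pos_of_liminf_pos [IsFiniteMeasure μ] {s : ℝ}
    (h : 0 < liminf (fun x => tail μ (x - s) / tail μ x) atTop) (x : ℝ) : 0 < tail μ x := by
  by_contra! hx
  have hzero : ∀ᶠ y in atTop, tail μ (y - s) / tail μ y = 0 :=
    (eventually_ge_atTop (x + s)).mono fun y hy => by
      rw [le_antisymm ((tail_antitone μ (by linarith)).trans hx) (tail_nonneg μ _), zero_div]
  rw [liminf_congr hzero, liminf_const] at h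
  exact h.false

lemma eventually_mul_tail_le_of_lt_liminf {s c : ℝ} (hpos : ∀ x, 0 < tail μ x)
    (hc : c < liminf (fun x => tail μ (x - s) / tail μ x) atTop) :
    ∀ᶠ x in atTop, c * tail μ x ≤ tail μ (x - s) :=
  (eventually_lt_of_lt_liminf hc (isBoundedUnder_of ⟨0, fun _ =>
    div_nonneg (tail_nonneg μ _) (tail_nonneg μ _)⟩)).mono fun x hx =>
      ((lt_div_iff₀ (hpos x)).1 hx).le

lemma eventually_tail_sub_le_of_tendsto {s L c : ℝ} (hpos : ∀ x, 0 < tail μ x)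
    (h : Tendsto (fun x => tail μ (x - s) / tail μ x) atTop (𝓝 L)) (hc : L < c) :
    ∀ᶠ x in atTop, tail μ (x - s) ≤ c * tail μ x :=
  (h.eventually (gt_mem_nhds hc)).mono fun x hx => ((div_lt_iff₀ (hpos x)).1 hx).le

lemma tendsto_tail_ratio_of_bounds {s L : ℝ} (hpos : ∀ x, 0 < tail μ x)
    (hlow : ∀ c < L, ∀ᶠ x in atTop, c * tail μ x ≤ tail μ (x - s))
    (hup : ∀ c > L, ∀ᶠ x in atTop, tail μ (x - s) ≤ c * tail μ x) :
    Tendsto (fun x => tail μ (x - s) / tail μ x) atTop (𝓝 L) := by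
  refine tendsto_order.2 ⟨fun c hc => ?_, fun c hc => ?_⟩
  · obtain ⟨c', hcc', hc'L⟩ := exists_between hc
    exact (hlow c' hc'L).mono fun x hx => hcc'.trans_le ((le_div_iff₀ (hpos x)).2 hx)
  · obtain ⟨c', hLc', hc'c⟩ := exists_between hc
    exact (hup c' hLc').mono fun x hx => ((div_le_iff₀ (hpos x)).2 hx).trans_lt hc'c

lemma memL_of_forall_pos {γ : ℝ} (hpos : ∀ x, 0 < tail μ x)
    (h : ∀ t > 0, Tendsto (fun x => tail μ (x - t) / tail μ x) atTop (𝓝 (exp (γ * t)))) :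
    MemL γ μ := by
  intro t
  rcases lt_trichotomy t 0 with ht | rfl | ht
  · have hshift := ((h (-t) (neg_pos.2 ht)).comp
      (tendsto_atTop_add_const_right atTop (-t) tendsto_id)).inv₀ (Real.exp_ne_zero _)
    convert hshift using 2
    · simp [inv_div, sub_eq_add_neg]
    · rw [← Real.exp_neg, mul_neg, neg_neg]
  · simp [div_self (hpos _).ne']
  · exact h t ht

lemma MemOS.exists_eventually_le (hOS : MemOS μ) (hpos : ∀ x, 0 < tail μ x) :
    ∃ C > 0, ∀ᶠ x in atTop, tail (mconv μ μ) x ≤ C * tail μ x := by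
  obtain ⟨b, hb⟩ := hOS
  exact ⟨max b 1, by positivity, (eventually_map.1 hb).mono fun x hx =>
    ((div_le_iff₀ (hpos x)).1 hx).trans
      (mul_le_mul_of_nonneg_right (le_max_left _ _) (tail_nonneg μ _))⟩

lemma tendsto_exp_mul_tail {γ : ℝ} (hγ : 0 ≤ γ)
    (h : ∫⁻ y, ENNReal.ofReal (exp (γ * y)) ∂μ ≠ ⊤) :
    Tendsto (fun x => exp (γ * x) * tail μ x) atTop (𝓝 0) := by
  set ν := μ.withDensity fun y => ENNReal.ofReal (exp (γ * y))
  have : IsFiniteMeasure ν := isFiniteMeasure_withDensity h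
  have hν : Tendsto (fun x => ν.real (Ioi x)) atTop (𝓝 0) := by
    have hIoi := tendsto_measure_iInter_atTop (μ := ν)
      (fun x => measurableSet_Ioi.nullMeasurableSet) antitone_Ioi ⟨0, measure_ne_top ν _⟩
    have hempty : ⋂ x : ℝ, Ioi x = ∅ := iInter_eq_empty_iff.2 fun y => ⟨y, lt_irrefl y⟩
    rw [hempty, measure_empty] at hIoi
    exact (ENNReal.tendsto_toReal ENNReal.zero_ne_top).comp hIoi
  refine squeeze_zero (fun x => mul_nonneg (exp_nonneg _) (tail_nonneg μ x)) (fun x => ?_) hν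
  have hfin := measure_ne_top ν (Ioi x)
  rw [withDensity_apply _ measurableSet_Ioi] at hfin
  rw [tail, ← ENNReal.toReal_ofReal (exp_nonneg (γ * x)), ← ENNReal.toReal_mul, measureReal_def,
    withDensity_apply _ measurableSet_Ioi, ← setLIntegral_const]
  refine ENNReal.toReal_mono hfin (setLIntegral_mono (by fun_prop) fun y hy => ?_)
  exact ENNReal.ofReal_le_ofReal (exp_le_exp.2 (mul_le_mul_of_nonneg_left (le_of_lt hy) hγ))

lemma exists_nonneg_measureReal_Ioc_pos [IsFiniteMeasure μ] [NeZero μ] (hμ : μ (Iio 0) = 0)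
    {w : ℝ} (hw : 0 < w) :
    ∃ s ≥ 0, 0 < μ.real (Ioc (s - w) s) := by
  by_contra! h
  have hnull : ∀ s, μ (Ioc (s - w) s) = 0 := fun s => by
    rcases lt_or_ge s 0 with hs | hs
    · exact measure_mono_null (fun y hy => (hy.2.trans_lt hs : y < 0)) hμ
    · exact (measureReal_eq_zero_iff).1 (le_antisymm (h s hs) measureReal_nonneg)
  refine NeZero.ne μ (Measure.measure_univ_eq_zero.1 ?_)
  rw [← iUnion_Ioc_add_zsmul hw 0]
  refine measure_iUnion_null fun n => ?_
  simpa [add_mul] using hnull ((n + 1) • w)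

lemma sub_mul_tail_mconv_le [IsFiniteMeasure μ] {κ T X a b z d : ℝ} {W : Set ℝ} (hκ : 0 ≤ κ)
    (hlow : ∀ u ≥ X, κ * tail μ u ≤ tail μ (u - T)) (hab : a + b = z - T) (ha : X ≤ z - a)
    (hb : X ≤ z - b) (hW : MeasurableSet W) (hWa : W ⊆ Iic a)
    (hd : ∀ y ∈ W, κ * tail μ (z - y) + d ≤ tail μ (z - T - y)) :
    κ * (tail (mconv μ μ) z - tail μ b * tail μ a) + d * μ.real W ≤ tail (mconv μ μ) (z - T) := by
  have hint := integrable_tail_sub μ μ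
  have hlow' : ∀ c, X ≤ z - c → ∀ y ≤ c, κ * tail μ (z - y) ≤ tail μ (z - T - y) :=
    fun c hc y hy => sub_right_comm z y T ▸ hlow (z - y) (by linarith)
  have hA : κ * ∫ y in Iic a, tail μ (z - y) ∂μ + d * μ.real W ≤
      ∫ y in Iic a, tail μ (z - T - y) ∂μ := by
    have hW_le : ∫ _ in W, d ∂μ ≤ ∫ y in W, (tail μ (z - T - y) - κ * tail μ (z - y)) ∂μ :=
      setIntegral_mono_on (integrable_const d).integrableOn
        (((hint _).sub ((hint z).const_mul κ)).integrableOn) hW fun y hy => by linarith [hd y hy]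
    have hle_Iic := setIntegral_mono_set
      (f := fun y => tail μ (z - T - y) - κ * tail μ (z - y))
      (((hint _).sub ((hint z).const_mul κ)).integrableOn)
      (ae_restrict_of_forall_mem measurableSet_Iic fun y hy => sub_nonneg.2 (hlow' a ha y hy))
      hWa.eventuallyLE
    rw [setIntegral_const, smul_eq_mul] at hW_le
    have hsplit : ∫ y in Iic a, (tail μ (z - T - y) - κ * tail μ (z - y)) ∂μ =
        ∫ y in Iic a, tail μ (z - T - y) ∂μ - κ * ∫ y in Iic a, tail μ (z - y) ∂μ := by
      rw [integral_sub (hint _).integrableOn ((hint z).const_mul κ).integrableOn,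
        integral_const_mul]
    linarith
  have hB : κ * ∫ y in Iic b, tail μ (z - y) ∂μ ≤ ∫ y in Iic b, tail μ (z - T - y) ∂μ := by
    rw [← integral_const_mul]
    exact setIntegral_mono_on ((hint z).const_mul κ).integrableOn (hint _).integrableOn
      measurableSet_Iic fun y hy => hlow' b hb y hy
  have hU := mul_le_mul_of_nonneg_left
    (sub_le_iff_le_add.2 (tail_mconv_le μ μ a b z)) hκ
  have hL := le_tail_mconv μ μ (v := z - T) hab.le
  linarith

lemma sub_mul_measureReal_Ioc_le [IsFiniteMeasure μ] {κ t T X s b x : ℝ} (hκ : 0 ≤ κ)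
    (hlow : ∀ u ≥ X, κ * tail μ u ≤ tail μ (u - T)) (hT : 0 ≤ T) (hb : X ≤ b) (hx : T + b ≤ x)
    (hxs : X + b ≤ x + s) :
    (tail μ (x - t) - κ * tail μ x) * μ.real (Ioc (s - (T - t)) s) ≤ tail (mconv μ μ) (x + s - T) -
      κ * (tail (mconv μ μ) (x + s) - tail μ b * tail μ (x + s - T - b)) := by
  have hwindow : ∀ y ∈ Ioc (s - (T - t)) s, κ * tail μ (x + s - y) +
      (tail μ (x - t) - κ * tail μ x) ≤ tail μ (x + s - T - y) := fun y hy => by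
    have h1 : tail μ (x + s - y) ≤ tail μ x := tail_antitone μ (by linarith [hy.2])
    have h2 : tail μ (x - t) ≤ tail μ (x + s - T - y) := tail_antitone μ (by linarith [hy.1])
    nlinarith [mul_le_mul_of_nonneg_left h1 hκ]
  have := sub_mul_tail_mconv_le hκ hlow (a := x + s - T - b) (b := b) (by ring) (by linarith)
    (by linarith) measurableSet_Ioc (fun y hy => hy.2.trans (by linarith)) hwindow
  linarith

end Ratio

section Main

variable {F : Measure ℝ} [IsProbabilityMeasure F] {γ : ℝ} (hs : F (Iio 0) = 0) (hγ : 0 ≤ γ)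
  (hOS : MemOS F) (hL2 : MemL γ (mconv F F))
  (hlim : ∀ t > (0 : ℝ), exp (γ * t) ≤ liminf (fun x => tail F (x - t) / tail F x) atTop)

include hlim in
lemma tail_pos_of_forall_exp_le_liminf (x : ℝ) : 0 < tail F x :=
  tail_pos_of_liminf_pos ((exp_pos _).trans_le (hlim 1 one_pos)) x

include hlim in
lemma eventually_mul_tail_le_tail_sub {y c : ℝ} (hy : 0 ≤ y) (hc : c < exp (γ * y)) :
    ∀ᶠ x in atTop, c * tail F x ≤ tail F (x - y) := by
  rcases hy.eq_or_lt with rfl | hy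
  · refine Eventually.of_forall fun x => ?_
    rw [sub_zero]
    exact mul_le_of_le_one_left (tail_nonneg F x) (by simpa using hc.le)
  · exact eventually_mul_tail_le_of_lt_liminf (tail_pos_of_forall_exp_le_liminf hlim)
      (hc.trans_le (hlim y hy))

include hs hlim in
lemma lintegral_exp_mul_le {C : ℝ} (hC : ∀ᶠ x in atTop, tail (mconv F F) x ≤ C * tail F x) :
    ∫⁻ y, ENNReal.ofReal (exp (γ * y)) ∂F ≤ ENNReal.ofReal C := by
  have hpos := tail_pos_of_forall_exp_le_liminf hlim
  have hF : ∀ᵐ y ∂F, 0 ≤ y := measure_mono_null (fun y (hy : ¬ 0 ≤ y) => (not_le.1 hy : y < 0)) hs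
  calc ∫⁻ y, ENNReal.ofReal (exp (γ * y)) ∂F
      ≤ ∫⁻ y, liminf (fun x => ENNReal.ofReal (tail F (x - y) / tail F x)) atTop ∂F :=
        lintegral_mono_ae <| hF.mono fun y hy => ENNReal.ofReal_le_liminf fun c hc =>
          (eventually_mul_tail_le_tail_sub hlim hy hc).mono fun x hx => (le_div_iff₀ (hpos x)).2 hx
    _ ≤ liminf (fun x => ∫⁻ y, ENNReal.ofReal (tail F (x - y) / tail F x) ∂F) atTop :=
        lintegral_liminf_le fun x => ((measurable_tail_sub F x).div_const _).ennreal_ofReal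
    _ = liminf (fun x => ENNReal.ofReal (tail (mconv F F) x / tail F x)) atTop := by
        congr 1
        funext x
        rw [tail_mconv_eq_integral, ← integral_div, ofReal_integral_eq_lintegral_ofReal
          ((integrable_tail_sub F F x).div_const _)
          (ae_of_all _ fun y => div_nonneg (tail_nonneg F _) (tail_nonneg F _))]
    _ ≤ ENNReal.ofReal C := liminf_le_of_frequently_le' <| hC.frequently.mono fun x hx =>
        ENNReal.ofReal_le_ofReal ((div_le_iff₀ (hpos x)).2 hx)

include hs in
lemma tail_mul_tail_le {T b z η : ℝ}
    (hG : tail (mconv F F) (z - (T + b)) ≤ 2 * exp (γ * (T + b)) * tail (mconv F F) z)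
    (hb : exp (γ * b) * tail F b ≤ η) :
    tail F b * tail F (z - T - b) ≤ 2 * exp (γ * T) * η * tail (mconv F F) z := by
  have hGz := tail_nonneg (mconv F F) z
  calc tail F b * tail F (z - T - b) ≤ tail F b * (2 * exp (γ * (T + b)) * tail (mconv F F) z) :=
        mul_le_mul_of_nonneg_left (by rw [sub_sub]; exact (tail_le_tail_mconv F F hs _).trans hG)
          (tail_nonneg F b)
    _ = 2 * exp (γ * T) * (exp (γ * b) * tail F b) * tail (mconv F F) z := by
        rw [mul_add, exp_add]; ring
    _ ≤ 2 * exp (γ * T) * η * tail (mconv F F) z := by gcongr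

include hs hγ hOS hL2 hlim in
lemma eventually_sub_mul_measureReal_Ioc_le {t T s ε : ℝ} (hT : 0 < T) (hs0 : 0 ≤ s)
    (hε : 0 < ε) : ∀ᶠ x in atTop,
      (tail F (x - t) - exp (γ * T) * tail F x) * F.real (Ioc (s - (T - t)) s) ≤ ε * tail F x := by
  have hpos := tail_pos_of_forall_exp_le_liminf hlim
  have hGpos x : 0 < tail (mconv F F) x := (hpos x).trans_le (tail_le_tail_mconv F F hs x)
  obtain ⟨C, hC, hGC⟩ := hOS.exists_eventually_le hpos
  set K := exp (γ * T)
  obtain ⟨η, hη, hηK, hηε⟩ : ∃ η > 0, η ≤ K ∧ (2 + 2 * K ^ 2) * C * η ≤ ε :=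
    ⟨min K (ε / ((2 + 2 * K ^ 2) * C)), lt_min (exp_pos _) (by positivity), min_le_left _ _,
      (le_div_iff₀' (by positivity)).1 (min_le_right _ _)⟩
  obtain ⟨X, hX⟩ := eventually_atTop.1
    (eventually_mul_tail_le_tail_sub hlim hT.le (sub_lt_self K hη))
  have hmom := ((lintegral_exp_mul_le hs hlim hGC).trans_lt ENNReal.ofReal_lt_top).ne
  obtain ⟨b, hbη, hbX⟩ := (((tendsto_exp_mul_tail hγ hmom).eventually (ge_mem_nhds hη)).and
    (eventually_ge_atTop X)).exists
  obtain ⟨Z, hZ⟩ := eventually_atTop.1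
    ((eventually_tail_sub_le_of_tendsto hGpos (hL2 T) (lt_add_of_pos_right K hη)).and
    ((eventually_tail_sub_le_of_tendsto hGpos (hL2 (T + b)) (lt_two_mul_self (exp_pos _))).and hGC))
  filter_upwards [eventually_ge_atTop Z, eventually_ge_atTop (T + b), eventually_ge_atTop (X + b)]
    with x hxZ hxT hxX
  obtain ⟨hGT, hGTb, hGCz⟩ := hZ (x + s) (by linarith)
  have hshift := sub_mul_measureReal_Ioc_le (t := t) (s := s) (sub_nonneg.2 hηK) hX hT.le hbX hxT
    (by linarith)
  have hbdry := tail_mul_tail_le hs hGTb hbη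
  have hGx : tail (mconv F F) (x + s) ≤ C * tail F x :=
    hGCz.trans (mul_le_mul_of_nonneg_left (tail_antitone F (by linarith)) hC.le)
  have hp := measureReal_nonneg (μ := F) (s := Ioc (s - (T - t)) s)
  have hbdry0 := mul_nonneg (tail_nonneg F b) (tail_nonneg F (x + s - T - b))
  calc (tail F (x - t) - K * tail F x) * F.real (Ioc (s - (T - t)) s)
      ≤ (tail F (x - t) - (K - η) * tail F x) * F.real (Ioc (s - (T - t)) s) := by
        nlinarith [mul_nonneg (mul_nonneg hη.le (tail_nonneg F x)) hp]
    _ ≤ 2 * η * tail (mconv F F) (x + s) + K * (tail F b * tail F (x + s - T - b)) := by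
        nlinarith [mul_nonneg hη.le hbdry0]
    _ ≤ (2 + 2 * K ^ 2) * η * tail (mconv F F) (x + s) := by nlinarith [exp_pos (γ * T)]
    _ ≤ (2 + 2 * K ^ 2) * η * (C * tail F x) := by gcongr
    _ = (2 + 2 * K ^ 2) * C * η * tail F x := by ring
    _ ≤ ε * tail F x := mul_le_mul_of_nonneg_right hηε (tail_nonneg F x)

include hs hγ hOS hL2 hlim in
lemma eventually_tail_sub_le {t c : ℝ} (ht : 0 < t) (hc : exp (γ * t) < c) :
    ∀ᶠ x in atTop, tail F (x - t) ≤ c * tail F x := by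
  obtain ⟨T, hTc, htT⟩ : ∃ T, exp (γ * T) < c ∧ t < T :=
    ((((continuous_exp.comp (continuous_const_mul γ)).tendsto t).eventually
      (gt_mem_nhds hc)).filter_mono nhdsWithin_le_nhds |>.and
        (self_mem_nhdsWithin (s := Ioi t))).exists
  obtain ⟨s, hs0, hp⟩ := exists_nonneg_measureReal_Ioc_pos hs (sub_pos.2 htT)
  filter_upwards [eventually_sub_mul_measureReal_Ioc_le hs hγ hOS hL2 hlim (ht.trans htT) hs0
    (mul_pos (sub_pos.2 hTc) hp)] with x hx
  have := le_of_mul_le_mul_right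
    (hx.trans_eq (mul_right_comm _ _ _) : _ ≤ (c - exp (γ * T)) * tail F x * _) hp
  linarith

end Main

theorem stmt6 (F : Measure ℝ) [IsProbabilityMeasure F] (hs : F (Set.Iio 0) = 0)
    (γ : ℝ) (hγ : 0 ≤ γ) (hOS : MemOS F) (hL2 : MemL γ (mconv F F))
    (hlim : ∀ t > (0 : ℝ),
      Real.exp (γ * t) ≤ Filter.liminf (fun x => tail F (x - t) / tail F x) Filter.atTop) :
    MemL γ F := by
  have hpos := tail_pos_of_forall_exp_le_liminf hlim
  exact memL_of_forall_pos hpos fun t ht => tendsto_tail_ratio_of_bounds hpos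
    (fun _ hc => eventually_mul_tail_le_tail_sub hlim ht.le hc)
    (fun _ hc => eventually_tail_sub_le hs hγ hOS hL2 hlim ht hc)
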